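/- Let μ be a reconciliation map from (T;t,σ) to S and suppose there exist time maps τ_T for T and τ_S for S satisfying: (D1) μ(u)=x ∈ V(S) implies τ_T(u)=τ_S(x); (D2) if x ⪯_S lca_S(σ_{T̄}(u)) for some u with t(u) ∈ {□,△}, then τ_S(x) > τ_T(u); (D3) if lca_S(σ_{T̄}(u) ∪ σ_{T̄}(v)) ⪯_S x for some transfer edge (u,v), then τ_T(u) > τ_S(x). Then there exists a time-consistent reconciliation map μ' from (T;t,σ) to S. -/

import Mathlib

/-- A rooted tree on vertex type `V`, encoded by a parent map.
Edges are directed away from the root; the edge into a non-root vertex `v`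
is `(par v, v)`. -/
structure RTree (V : Type*) where
  root : V
  par : V → V
  par_root : par root = root
  par_ne : ∀ v, v ≠ root → par v ≠ v
  reaches : ∀ v, ∃ k, par^[k] v = root

namespace RTree

variable {V : Type*}

/-- `anc T x y` : `x` is a descendant of `y`, i.e. `x ⪯_T y`. -/
def anc (T : RTree V) (x y : V) : Prop := ∃ k, (T.par)^[k] x = y

/-- strict descendant: `x ≺_T y`. -/
def sanc (T : RTree V) (x y : V) : Prop := T.anc x y ∧ x ≠ y

def IsLeaf (T : RTree V) (v : V) : Prop := ∀ u, T.par u = v → u = v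

/-- `x` is a least common ancestor of the set `A`. -/
def IsLca (T : RTree V) (A : Set V) (x : V) : Prop :=
  (∀ a ∈ A, T.anc a x) ∧ ∀ y, (∀ a ∈ A, T.anc a y) → T.anc x y

/-- A time map: strict descendants have strictly larger time stamps. -/
def IsTimeMap (T : RTree V) (τ : V → ℝ) : Prop :=
  ∀ x y, T.sanc x y → τ y < τ x

end RTree

/-- Event labels: speciation `•`, duplication `□`, HGT `△`, leaf `⊙`. -/
inductive Event where
  | spec | dup | hgt | leaf
deriving DecidableEq

/-- The common setup: a gene tree `T` (vertices `V`) with event labels `t`,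
transfer edges `trans` (an edge is recorded by its child endpoint),
a species tree `S` (vertices `W`), the map `sig = σ` assigning to each gene
(leaf of `T`) the species (leaf of `S`) it resides in, and a least common
ancestor function `lca` on the species tree. -/
structure ReconSetup (V W : Type*) where
  T : RTree V
  S : RTree W
  t : V → Event
  trans : Set V
  sig : V → W
  lca : Set W → W
  trans_ne_root : ∀ v ∈ trans, v ≠ T.root
  trans_hgt : ∀ v ∈ trans, t (T.par v) = Event.hgt
  leaf_iff : ∀ v, T.IsLeaf v ↔ t v = Event.leaf
  sig_leaf : ∀ v, T.IsLeaf v → S.IsLeaf (sig v)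
  lca_spec : ∀ A : Set W, A.Nonempty → S.IsLca A (lca A)

/-- lower endpoint of a vertex-or-edge of the species tree
(an edge `(S.par y, y)` is encoded as `Sum.inr y`; a vertex `x` as `Sum.inl x`). -/
def lowPt {W : Type*} : W ⊕ W → W := Sum.elim id id

namespace ReconSetup

variable {V W : Type*}

/-- ancestor order of the forest `T_{E̅}` obtained by deleting transfer edges. -/
def fanc (R : ReconSetup V W) (x y : V) : Prop :=
  ∃ k, (R.T.par)^[k] x = y ∧ ∀ i < k, (R.T.par)^[i] x ∉ R.trans

def sfanc (R : ReconSetup V W) (x y : V) : Prop := R.fanc x y ∧ x ≠ y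

/-- `σ_{T̅}(u)`: the species of the leaves of `T` below `u` in the forest `T_{E̅}`. -/
def sigmaBar (R : ReconSetup V W) (u : V) : Set W :=
  R.sig '' {l | R.T.IsLeaf l ∧ R.fanc l u}

/-- Ancestor order of `S` extended to vertices and edges:
`z ⪯ (x,y) ↔ z ⪯ y`, `(x,y) ⪯ z ↔ x ⪯ z`, `(x,y) ⪯ (a,b) ↔ y ⪯ b`. -/
def extLE (R : ReconSetup V W) : W ⊕ W → W ⊕ W → Prop
  | Sum.inl a, Sum.inl b => R.S.anc a b
  | Sum.inl a, Sum.inr y => R.S.anc a y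
  | Sum.inr y, Sum.inl b => R.S.anc (R.S.par y) b
  | Sum.inr y, Sum.inr z => R.S.anc y z

def extLT (R : ReconSetup V W) (p q : W ⊕ W) : Prop := R.extLE p q ∧ ¬ R.extLE q p

def incomp (R : ReconSetup V W) (p q : W ⊕ W) : Prop := ¬ R.extLE p q ∧ ¬ R.extLE q p

def IsDupHGT (R : ReconSetup V W) (u : V) : Prop :=
  R.t u = Event.dup ∨ R.t u = Event.hgt

/-- (M1) leaf constraint. -/
def M1 (R : ReconSetup V W) (μ : V → W ⊕ W) : Prop :=
  ∀ u, R.T.IsLeaf u → μ u = Sum.inl (R.sig u)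

/-- (M2i) speciation vertices map to the lca of the species below them. -/
def M2i (R : ReconSetup V W) (μ : V → W ⊕ W) : Prop :=
  ∀ u, R.t u = Event.spec → μ u = Sum.inl (R.lca (R.sigmaBar u))

/-- (M2ii) duplication/HGT vertices map to edges of `S`. -/
def M2ii (R : ReconSetup V W) (μ : V → W ⊕ W) : Prop :=
  ∀ u, R.IsDupHGT u → ∃ y, y ≠ R.S.root ∧ μ u = Sum.inr y

/-- (M2iii) the endpoints of a transfer edge receive incomparable images. -/
def M2iii (R : ReconSetup V W) (μ : V → W ⊕ W) : Prop :=
  ∀ v ∈ R.trans, R.incomp (μ (R.T.par v)) (μ v)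

/-- (M3) ancestor constraint within components of `T_{E̅}`. -/
def M3 (R : ReconSetup V W) (μ : V → W ⊕ W) : Prop :=
  ∀ v w, R.sfanc v w →
    ((R.IsDupHGT v ∧ R.IsDupHGT w) → R.extLE (μ v) (μ w)) ∧
    (¬ (R.IsDupHGT v ∧ R.IsDupHGT w) → R.extLT (μ v) (μ w))

/-- `μ` is a reconciliation map from `(T;t,σ)` to `S`. -/
def IsRecon (R : ReconSetup V W) (μ : V → W ⊕ W) : Prop :=
  R.M1 μ ∧ R.M2i μ ∧ R.M2ii μ ∧ R.M2iii μ ∧ R.M3 μ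

/-- (O1) every internal vertex has at least two children. -/
def O1 (R : ReconSetup V W) : Prop :=
  ∀ v, ¬ R.T.IsLeaf v →
    ∃ a b, a ≠ b ∧ R.T.par a = v ∧ R.T.par b = v ∧ a ≠ v ∧ b ≠ v

/-- (O2) every HGT vertex has a transfer child edge and a non-transfer child edge. -/
def O2 (R : ReconSetup V W) : Prop :=
  ∀ v, R.t v = Event.hgt →
    (∃ c, R.T.par c = v ∧ c ∈ R.trans) ∧ (∃ c, R.T.par c = v ∧ c ≠ v ∧ c ∉ R.trans)

/-- (Σ1) a speciation vertex has two children whose species sets are disjoint. -/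
def Sigma1 (R : ReconSetup V W) : Prop :=
  ∀ x, R.t x = Event.spec →
    ∃ v w, v ≠ w ∧ R.T.par v = x ∧ R.T.par w = x ∧ v ≠ x ∧ w ≠ x ∧
      R.sigmaBar v ∩ R.sigmaBar w = ∅

/-- (Σ2) the species sets across a transfer edge are disjoint. -/
def Sigma2 (R : ReconSetup V W) : Prop :=
  ∀ w ∈ R.trans, R.sigmaBar (R.T.par w) ∩ R.sigmaBar w = ∅

/-- the gene tree is binary. -/
def BinaryT (R : ReconSetup V W) : Prop :=
  ∀ v, ¬ R.T.IsLeaf v →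
    ∃ a b, a ≠ b ∧ ∀ c, (R.T.par c = v ∧ c ≠ v) ↔ (c = a ∨ c = b)

/-- the species tree is binary. -/
def BinaryS (R : ReconSetup V W) : Prop :=
  ∀ v, ¬ R.S.IsLeaf v →
    ∃ a b, a ≠ b ∧ ∀ c, (R.S.par c = v ∧ c ≠ v) ↔ (c = a ∨ c = b)

/-- (C1) speciation vertices and leaves get the same time as their image. -/
def C1 (R : ReconSetup V W) (μ : V → W ⊕ W) (τT : V → ℝ) (τS : W → ℝ) : Prop :=
  ∀ u x, (R.t u = Event.spec ∨ R.t u = Event.leaf) → μ u = Sum.inl x → τT u = τS x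

/-- (C2) a vertex mapped into an edge `(x,y)` gets a time strictly between
the times of `x` and `y`. -/
def C2 (R : ReconSetup V W) (μ : V → W ⊕ W) (τT : V → ℝ) (τS : W → ℝ) : Prop :=
  ∀ u y, R.IsDupHGT u → μ u = Sum.inr y → τS (R.S.par y) < τT u ∧ τT u < τS y

/-- `μ` is a time-consistent reconciliation map. -/
def TimeConsistent (R : ReconSetup V W) (μ : V → W ⊕ W) : Prop :=
  ∃ τT τS, R.T.IsTimeMap τT ∧ R.S.IsTimeMap τS ∧ R.C1 μ τT τS ∧ R.C2 μ τT τS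

/-- (D1). -/
def D1 (R : ReconSetup V W) (μ : V → W ⊕ W) (τT : V → ℝ) (τS : W → ℝ) : Prop :=
  ∀ u x, μ u = Sum.inl x → τT u = τS x

/-- (D2). -/
def D2 (R : ReconSetup V W) (τT : V → ℝ) (τS : W → ℝ) : Prop :=
  ∀ u x, R.IsDupHGT u → R.S.anc x (R.lca (R.sigmaBar u)) → τT u < τS x

/-- (D3), for a transfer edge `(T.par v, v)` with `v ∈ trans`. -/
def D3 (R : ReconSetup V W) (τT : V → ℝ) (τS : W → ℝ) : Prop :=
  ∀ v x, v ∈ R.trans →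
    R.S.anc (R.lca (R.sigmaBar (R.T.par v) ∪ R.sigmaBar v)) x → τS x < τT (R.T.par v)

/-- The DTL-scenario axioms (I)-(IV) for a map `γ : V(T) → V(S)`. -/
def DTL (R : ReconSetup V W) (γ : V → W) : Prop :=
  (∀ u, R.T.IsLeaf u → γ u = R.sig u) ∧
  (∀ u v w, v ≠ w → R.T.par v = u → R.T.par w = u → v ≠ u → w ≠ u →
    ((¬ R.S.sanc (γ u) (γ v) ∧ ¬ R.S.sanc (γ u) (γ w)) ∧
     (R.S.anc (γ v) (γ u) ∨ R.S.anc (γ w) (γ u)))) ∧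
  (∀ v, v ≠ R.T.root →
    (v ∈ R.trans ↔ (¬ R.S.anc (γ (R.T.par v)) (γ v) ∧ ¬ R.S.anc (γ v) (γ (R.T.par v))))) ∧
  (∀ u v w, v ≠ w → R.T.par v = u → R.T.par w = u → v ≠ u → w ≠ u →
    ((R.t u = Event.hgt ↔ (v ∈ R.trans ∨ w ∈ R.trans)) ∧
     (R.t u = Event.spec →
       γ u = R.lca {γ v, γ w} ∧ ¬ R.S.anc (γ v) (γ w) ∧ ¬ R.S.anc (γ w) (γ v)) ∧
     (R.t u = Event.dup → R.S.anc (R.lca {γ v, γ w}) (γ u))))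

end ReconSetup

/-- A directed graph (relation) is acyclic: no edge closes a directed cycle. -/
def Acyclic {α : Type*} (r : α → α → Prop) : Prop :=
  ∀ x y, r x y → ¬ Relation.ReflTransGen r y x

/-!
Keep `μ` on speciation vertices and leaves, where (D1) already dates it, and move each
duplication/HGT vertex `u` into the edge of `S` above `lca(σ_T̄(u))` that contains its time; such an
edge exists by (D2) once the root of `S` is given a time earlier than all others and the
duplication/HGT vertices are moved earlier by less than any gap between times, so that none of them
is simultaneous with a vertex of `S`. Comparable images are then ordered by their times, which
gives (M3); and by (D3) everything above both species sets of a transfer edge is older than its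
tail, while the images of both ends are not, which gives (M2iii).
-/

theorem Finite.exists_pos_add_le_of_lt {ι α : Type*} [Finite ι] [Ring α] [LinearOrder α]
    [IsStrictOrderedRing α] (f : ι → α) : ∃ δ > 0, ∀ i j, f i < f j → f i + δ ≤ f j := by
  classical
  rcases isEmpty_or_nonempty ι with hι | hι
  · exact ⟨1, one_pos, fun i => isEmptyElim i⟩
  let gap : ι × ι → α := fun p => if f p.1 < f p.2 then f p.2 - f p.1 else 1
  obtain ⟨p, hp⟩ := Finite.exists_min gap
  refine ⟨gap p, ?_, fun i j hij => ?_⟩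
  · dsimp only [gap]
    split_ifs with h
    exacts [sub_pos.2 h, one_pos]
  · have := hp (i, j)
    rwa [show gap (i, j) = f j - f i from if_pos hij, le_sub_iff_add_le'] at this

namespace RTree

variable {V : Type*} (T : RTree V)

theorem anc_refl (x : V) : T.anc x x := ⟨0, rfl⟩

theorem anc_trans {x y z : V} (hxy : T.anc x y) (hyz : T.anc y z) : T.anc x z := by
  obtain ⟨i, rfl⟩ := hxy
  obtain ⟨j, rfl⟩ := hyz
  exact ⟨j + i, Function.iterate_add_apply _ _ _ _⟩

theorem anc_par (x : V) : T.anc x (T.par x) := ⟨1, rfl⟩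

theorem anc_root (x : V) : T.anc x T.root := T.reaches x

theorem eq_root_of_root_anc {x : V} (h : T.anc T.root x) : x = T.root := by
  obtain ⟨k, rfl⟩ := h
  exact Function.iterate_fixed T.par_root k

theorem ne_root_of_sanc {x y : V} (h : T.sanc x y) : x ≠ T.root := by
  rintro rfl
  exact h.2 (T.eq_root_of_root_anc h.1).symm

theorem anc_par_of_anc_of_ne {x y : V} (h : T.anc x y) (hne : x ≠ y) : T.anc (T.par x) y := by
  obtain ⟨_ | k, rfl⟩ := h
  · exact absurd rfl hne
  · exact ⟨k, (Function.iterate_succ_apply _ _ _).symm⟩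

theorem anc_total {x y z : V} (hx : T.anc z x) (hy : T.anc z y) : T.anc x y ∨ T.anc y x := by
  obtain ⟨i, rfl⟩ := hx
  obtain ⟨j, rfl⟩ := hy
  rcases le_total i j with h | h
  · exact .inl ⟨j - i, by rw [← Function.iterate_add_apply, Nat.sub_add_cancel h]⟩
  · exact .inr ⟨i - j, by rw [← Function.iterate_add_apply, Nat.sub_add_cancel h]⟩

namespace IsTimeMap

variable {T} {τ : V → ℝ} (hτ : T.IsTimeMap τ)
include hτ

theorem le_of_anc {x y : V} (h : T.anc x y) : τ y ≤ τ x := by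
  rcases eq_or_ne x y with rfl | hne
  · exact le_rfl
  · exact (hτ x y ⟨h, hne⟩).le

theorem par_lt {v : V} (hv : v ≠ T.root) : τ (T.par v) < τ v :=
  hτ v _ ⟨T.anc_par v, (T.par_ne v hv).symm⟩

theorem update_root [DecidableEq V] {c : ℝ} (hc : ∀ x, x ≠ T.root → c < τ x) :
    T.IsTimeMap (Function.update τ T.root c) := by
  intro x y hxy
  have hx := T.ne_root_of_sanc hxy
  rw [Function.update_of_ne hx]
  rcases eq_or_ne y T.root with rfl | hy
  · rw [Function.update_self]
    exact hc x hx
  · rw [Function.update_of_ne hy]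
    exact hτ x y hxy

theorem of_le_of_sub_le {τ' : V → ℝ} {δ ε : ℝ} (hgap : ∀ x y, τ x < τ y → τ x + δ ≤ τ y)
    (hεδ : ε < δ) (hle : ∀ x, τ' x ≤ τ x) (hge : ∀ x, x ≠ T.root → τ x - ε ≤ τ' x) :
    T.IsTimeMap τ' := by
  intro x y hxy
  have := hgap y x (hτ x y hxy)
  linarith [hle y, hge x (T.ne_root_of_sanc hxy)]

end IsTimeMap

def TimeIn (τ : V → ℝ) (t : ℝ) : V ⊕ V → Prop
  | .inl x => t = τ x
  | .inr y => τ (T.par y) < t ∧ t < τ y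

theorem TimeIn.le_lowPt {T : RTree V} {τ : V → ℝ} {t : ℝ} {p : V ⊕ V} (h : T.TimeIn τ t p) :
    t ≤ τ (lowPt p) := by
  rcases p with x | y
  exacts [h.le, h.2.le]

theorem TimeIn.ne_root {T : RTree V} {τ : V → ℝ} {t : ℝ} {y : V} (h : T.TimeIn τ t (.inr y)) :
    y ≠ T.root := by
  rintro rfl
  have : τ (T.par T.root) < τ T.root := h.1.trans h.2
  rw [T.par_root] at this
  exact lt_irrefl _ this

/-- Walking up from `x`, the first edge whose upper end is earlier than `t` contains `t`. -/
theorem exists_anc_timeIn_inr (τ : V → ℝ) {x : V} {t : ℝ} (hx : t < τ x) (hroot : τ T.root < t)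
    (hne : ∀ z, τ z ≠ t) : ∃ y, T.anc x y ∧ T.TimeIn τ t (.inr y) := by
  classical
  have hex : ∃ j, τ (T.par (T.par^[j] x)) < t := by
    obtain ⟨k, hk⟩ := T.reaches x
    exact ⟨k, by rwa [hk, T.par_root]⟩
  refine ⟨T.par^[Nat.find hex] x, ⟨_, rfl⟩, Nat.find_spec hex, lt_of_le_of_ne ?_ (hne _).symm⟩
  rcases h : Nat.find hex with _ | j
  · exact hx.le
  · rw [Function.iterate_succ_apply']
    exact not_lt.1 (Nat.find_min hex (h ▸ j.lt_succ_self))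

end RTree

namespace ReconSetup

variable {V W : Type*} (R : ReconSetup V W)

theorem fanc_refl (x : V) : R.fanc x x := ⟨0, rfl, fun _ h => absurd h (Nat.not_lt_zero _)⟩

theorem fanc_anc {x y : V} (h : R.fanc x y) : R.T.anc x y :=
  let ⟨k, hk, _⟩ := h
  ⟨k, hk⟩

theorem fanc_trans {x y z : V} (hxy : R.fanc x y) (hyz : R.fanc y z) : R.fanc x z := by
  obtain ⟨i, rfl, hi⟩ := hxy
  obtain ⟨j, rfl, hj⟩ := hyz
  refine ⟨j + i, Function.iterate_add_apply _ _ _ _, fun k hk => ?_⟩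
  rcases lt_or_ge k i with hki | hik
  · exact hi k hki
  · rw [← Nat.sub_add_cancel hik, Function.iterate_add_apply]
    exact hj _ (by omega)

theorem fanc_par {v : V} (hv : v ∉ R.trans) : R.fanc v (R.T.par v) :=
  ⟨1, rfl, fun i hi => by rwa [Nat.lt_one_iff.1 hi]⟩

theorem sigmaBar_mono {v w : V} (h : R.fanc v w) : R.sigmaBar v ⊆ R.sigmaBar w := by
  rintro _ ⟨l, ⟨hl, hlv⟩, rfl⟩
  exact ⟨l, ⟨hl, R.fanc_trans hlv h⟩, rfl⟩

theorem exists_nontrans_child (hO1 : R.O1) (hO2 : R.O2) {u : V} (hu : ¬ R.T.IsLeaf u) :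
    ∃ c, R.T.par c = u ∧ c ≠ u ∧ c ∉ R.trans := by
  by_cases hh : R.t u = .hgt
  · exact (hO2 u hh).2
  · obtain ⟨a, -, -, ha, -, hau, -⟩ := hO1 u hu
    exact ⟨a, ha, hau, fun hat => hh (ha ▸ R.trans_hgt a hat)⟩

theorem sigmaBar_nonempty [Finite V] {τT : V → ℝ} (hτT : R.T.IsTimeMap τT) (hO1 : R.O1)
    (hO2 : R.O2) (u : V) : (R.sigmaBar u).Nonempty := by
  obtain ⟨l, hlu, hmax⟩ := Set.exists_max_image {l | R.fanc l u} τT (Set.toFinite _)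
    ⟨u, R.fanc_refl u⟩
  suffices hl : R.T.IsLeaf l from ⟨R.sig l, l, ⟨hl, hlu⟩, rfl⟩
  by_contra hl
  obtain ⟨c, rfl, hcl, hct⟩ := R.exists_nontrans_child hO1 hO2 hl
  exact (hmax c (R.fanc_trans (R.fanc_par hct) hlu)).not_gt (hτT c _ ⟨R.T.anc_par c, hcl⟩)

theorem not_isDupHGT_iff {u : V} : ¬ R.IsDupHGT u ↔ R.t u = .spec ∨ R.t u = .leaf := by
  unfold IsDupHGT
  cases R.t u <;> simp

theorem extLE_inl_root (p : W ⊕ W) : R.extLE p (.inl R.S.root) := by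
  rcases p with x | y
  exacts [R.S.anc_root x, R.S.anc_root _]

theorem anc_lowPt_of_extLE {p q : W ⊕ W} (h : R.extLE p q) : R.S.anc (lowPt p) (lowPt q) := by
  rcases p with x | y <;> rcases q with z | z
  · exact h
  · exact h
  · exact R.S.anc_trans (R.S.anc_par y) h
  · exact h

section TimeIn

variable {R} {τ : W → ℝ} (hτ : R.S.IsTimeMap τ)
include hτ

theorem eq_or_lt_of_extLE {p q : W ⊕ W} {s t : ℝ} (hp : R.S.TimeIn τ s p)
    (hq : R.S.TimeIn τ t q) (h : R.extLE p q) : p = q ∨ t < s := by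
  rcases p with x | y <;> rcases q with z | z <;>
    simp only [extLE, RTree.TimeIn] at h hp hq
  · rcases eq_or_ne x z with rfl | hne
    · exact .inl rfl
    · exact .inr (hp ▸ hq ▸ hτ x z ⟨h, hne⟩)
  · exact .inr (by linarith [hτ.le_of_anc h])
  · exact .inr (by linarith [hτ.le_of_anc h])
  · rcases eq_or_ne y z with rfl | hne
    · exact .inl rfl
    · exact .inr (by linarith [hτ.le_of_anc (R.S.anc_par_of_anc_of_ne h hne)])

theorem extLE_of_timeIn {p q : W ⊕ W} {s t : ℝ} (hp : R.S.TimeIn τ s p)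
    (hq : R.S.TimeIn τ t q) (hts : t < s)
    (hpq : R.S.anc (lowPt p) (lowPt q) ∨ R.S.anc (lowPt q) (lowPt p)) : R.extLE p q := by
  rcases p with x | y <;> rcases q with z | z <;>
    simp only [extLE, RTree.TimeIn, lowPt, Sum.elim_inl, Sum.elim_inr, id] at hp hq hpq ⊢
  · exact hpq.resolve_right fun h => by linarith [hτ.le_of_anc h]
  · refine hpq.elim id fun h => ?_
    rcases eq_or_ne z x with rfl | hne
    · exact R.S.anc_refl z
    · linarith [hτ.le_of_anc (R.S.anc_par_of_anc_of_ne h hne)]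
  · have hyz := hpq.resolve_right fun h => by linarith [hτ.le_of_anc h]
    refine R.S.anc_par_of_anc_of_ne hyz ?_
    rintro rfl
    linarith
  · refine hpq.elim id fun h => ?_
    rcases eq_or_ne z y with rfl | hne
    · exact R.S.anc_refl z
    · linarith [hτ.le_of_anc (R.S.anc_par_of_anc_of_ne h hne)]

end TimeIn

variable {R}

namespace IsRecon

variable {μ : V → W ⊕ W} (hμ : R.IsRecon μ)
include hμ

theorem exists_eq_inl {u : V} (hu : ¬ R.IsDupHGT u) : ∃ x, μ u = .inl x := by
  rcases R.not_isDupHGT_iff.1 hu with h | h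
  · exact ⟨_, hμ.2.1 u h⟩
  · exact ⟨_, hμ.1 u ((R.leaf_iff u).2 h)⟩

theorem anc_lowPt {u : V} {s : W} (hs : s ∈ R.sigmaBar u) : R.S.anc s (lowPt (μ u)) := by
  obtain ⟨l, ⟨hl, hlu⟩, rfl⟩ := hs
  have hμl : μ l = .inl (R.sig l) := hμ.1 l hl
  rcases eq_or_ne l u with rfl | hne
  · rw [hμl]
    exact R.S.anc_refl _
  · have hl' : ¬ R.IsDupHGT l := R.not_isDupHGT_iff.2 (.inr ((R.leaf_iff l).1 hl))
    have := R.anc_lowPt_of_extLE ((hμ.2.2.2.2 l u ⟨hlu, hne⟩).2 fun h => hl' h.1).1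
    rwa [hμl] at this

theorem eq_root_of_eq_inl_root {u : V} (hu : μ u = .inl R.S.root) : u = R.T.root := by
  by_contra hne
  have hext : R.extLE (μ (R.T.par u)) (μ u) := hu ▸ R.extLE_inl_root _
  by_cases ht : u ∈ R.trans
  · exact (hμ.2.2.2.1 u ht).1 hext
  · have hu' : ¬ R.IsDupHGT u := fun hd => by
      obtain ⟨y, -, hy⟩ := hμ.2.2.1 u hd
      rw [hu] at hy
      cases hy
    have hsf : R.sfanc u (R.T.par u) := ⟨R.fanc_par ht, (R.T.par_ne u hne).symm⟩
    exact ((hμ.2.2.2.2 u _ hsf).2 fun h => hu' h.1).2 hext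

theorem lca_sigmaBar_ne_root {u : V} (hne : (R.sigmaBar u).Nonempty) (hu : R.IsDupHGT u) :
    R.lca (R.sigmaBar u) ≠ R.S.root := by
  obtain ⟨y, hy, hμu⟩ := hμ.2.2.1 u hu
  have : R.S.anc (R.lca (R.sigmaBar u)) y :=
    (R.lca_spec _ hne).2 y fun s hs => by simpa [hμu, lowPt] using hμ.anc_lowPt hs
  intro h
  rw [h] at this
  exact hy (R.S.eq_root_of_root_anc this)

end IsRecon

theorem isRecon_of_timeIn {μ μ' : V → W ⊕ W} (hμ : R.IsRecon μ)
    (hne : ∀ u, (R.sigmaBar u).Nonempty) {τT : V → ℝ} {τS : W → ℝ}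
    (hτT : R.T.IsTimeMap τT) (hτS : R.S.IsTimeMap τS) (hD3 : R.D3 τT τS)
    (hμ'μ : ∀ u, ¬ R.IsDupHGT u → μ' u = μ u)
    (hμ'dup : ∀ u, R.IsDupHGT u → ∃ y, μ' u = .inr y ∧ R.S.anc (R.lca (R.sigmaBar u)) y)
    (htime : ∀ u, R.S.TimeIn τS (τT u) (μ' u)) : R.IsRecon μ' := by
  have hlow : ∀ u, ∀ s ∈ R.sigmaBar u, R.S.anc s (lowPt (μ' u)) := by
    intro u s hs
    by_cases hu : R.IsDupHGT u
    · obtain ⟨y, hy, hly⟩ := hμ'dup u hu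
      rw [hy]
      exact R.S.anc_trans ((R.lca_spec _ (hne u)).1 s hs) hly
    · rw [hμ'μ u hu]
      exact hμ.anc_lowPt hs
  refine ⟨fun u hu => ?_, fun u hu => ?_, fun u hu => ?_, fun v hv => ?_, fun v w hvw => ?_⟩
  · rw [hμ'μ u (R.not_isDupHGT_iff.2 (.inr ((R.leaf_iff u).1 hu)))]
    exact hμ.1 u hu
  · rw [hμ'μ u (R.not_isDupHGT_iff.2 (.inl hu))]
    exact hμ.2.1 u hu
  · obtain ⟨y, hy, -⟩ := hμ'dup u hu
    exact ⟨y, (hy ▸ htime u).ne_root, hy⟩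
  · have hcontra : ∀ q, τT (R.T.par v) ≤ τT q →
        (∀ s ∈ R.sigmaBar (R.T.par v) ∪ R.sigmaBar v, R.S.anc s (lowPt (μ' q))) → False := by
      intro q hq hs
      have := hD3 v _ hv ((R.lca_spec _ (hne _).inl).2 _ hs)
      linarith [(htime q).le_lowPt]
    refine ⟨fun h => hcontra v (hτT.par_lt (R.trans_ne_root v hv)).le ?_,
      fun h => hcontra (R.T.par v) le_rfl ?_⟩ <;> rintro s (hs | hs)
    · exact R.S.anc_trans (hlow _ s hs) (R.anc_lowPt_of_extLE h)
    · exact hlow v s hs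
    · exact hlow _ s hs
    · exact R.S.anc_trans (hlow v s hs) (R.anc_lowPt_of_extLE h)
  · have hlt : τT w < τT v := hτT v w ⟨R.fanc_anc hvw.1, hvw.2⟩
    obtain ⟨s, hs⟩ := hne v
    have hle : R.extLE (μ' v) (μ' w) := extLE_of_timeIn hτS (htime v) (htime w) hlt
      (R.S.anc_total (hlow v s hs) (hlow w s (R.sigmaBar_mono hvw.1 hs)))
    refine ⟨fun _ => hle, fun hnd => ⟨hle, fun hwv => ?_⟩⟩
    rcases eq_or_lt_of_extLE hτS (htime w) (htime v) hwv with heq | hlt'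
    · obtain ⟨x, hx⟩ : ∃ x, μ' v = .inl x := by
        rcases not_and_or.1 hnd with hv | hw
        · exact hμ'μ v hv ▸ hμ.exists_eq_inl hv
        · exact heq ▸ hμ'μ w hw ▸ hμ.exists_eq_inl hw
      have hv := htime v
      have hw := htime w
      rw [hx] at hv
      rw [heq, hx] at hw
      exact hlt.ne (hw.trans hv.symm)
    · exact hlt.not_gt hlt'

theorem timeConsistent_of_timeIn {μ : V → W ⊕ W} {τT : V → ℝ} {τS : W → ℝ}
    (hτT : R.T.IsTimeMap τT) (hτS : R.S.IsTimeMap τS)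
    (htime : ∀ u, R.S.TimeIn τS (τT u) (μ u)) : R.TimeConsistent μ :=
  ⟨τT, τS, hτT, hτS, fun u x _ hx => by simpa [hx, RTree.TimeIn] using htime u,
    fun u y _ hy => by simpa [hy, RTree.TimeIn] using htime u⟩

/-- (D1)–(D3), plus what it takes to fit each duplication/HGT vertex strictly inside an edge. -/
structure IsStrictDating (R : ReconSetup V W) (μ : V → W ⊕ W) (τT : V → ℝ) (τS : W → ℝ) :
    Prop where
  isTimeMap_T : R.T.IsTimeMap τT
  isTimeMap_S : R.S.IsTimeMap τS
  d1 : R.D1 μ τT τS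
  lt_lca : ∀ u, R.IsDupHGT u → τT u < τS (R.lca (R.sigmaBar u))
  d3 : R.D3 τT τS
  root_lt : ∀ u, R.IsDupHGT u → τS R.S.root < τT u
  ne : ∀ u, R.IsDupHGT u → ∀ x, τS x ≠ τT u

theorem IsRecon.isTimeMap_sumElim {μ : V → W ⊕ W} (hμ : R.IsRecon μ) {τT : V → ℝ}
    {τS τS' : W → ℝ} (hτT : R.T.IsTimeMap τT) (hD1 : R.D1 μ τT τS) (hS'le : ∀ x, τS' x ≤ τS x)
    (hS' : ∀ x, x ≠ R.S.root → τS' x = τS x) {δ ε : ℝ}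
    (hgap : ∀ u v, τT u < τT v → τT u + δ ≤ τT v) (hε : 0 ≤ ε) (hεδ : ε < δ) :
    R.T.IsTimeMap fun u => Sum.elim τS' (fun _ => τT u - ε) (μ u) := by
  refine hτT.of_le_of_sub_le hgap hεδ (fun u => ?_) (fun u hu => ?_) <;>
    rcases hμu : μ u with x | y <;> simp only [Sum.elim_inl, Sum.elim_inr, le_refl]
  · exact (hS'le x).trans (hD1 u x hμu).ge
  · linarith
  · rw [hS' x fun hx => hu (hμ.eq_root_of_eq_inl_root (hx ▸ hμu)), hD1 u x hμu]
    linarith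

theorem IsRecon.exists_isStrictDating [Finite V] [Finite W] {μ : V → W ⊕ W} (hμ : R.IsRecon μ)
    (hne : ∀ u, (R.sigmaBar u).Nonempty) {τT : V → ℝ} {τS : W → ℝ} (hτT : R.T.IsTimeMap τT)
    (hτS : R.S.IsTimeMap τS) (hD1 : R.D1 μ τT τS) (hD2 : R.D2 τT τS) (hD3 : R.D3 τT τS) :
    ∃ τT' τS', R.IsStrictDating μ τT' τS' := by
  classical
  obtain ⟨δ, hδ, hgap⟩ := Finite.exists_pos_add_le_of_lt (Sum.elim τT τS)
  obtain ⟨c, hc⟩ := Finite.bddBelow_range (Sum.elim τT τS)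
  have hcT : ∀ u, c ≤ τT u := fun u => hc ⟨.inl u, rfl⟩
  have hcS : ∀ x, c ≤ τS x := fun x => hc ⟨.inr x, rfl⟩
  have hgapST : ∀ x u, τS x < τT u → τS x + δ ≤ τT u := fun x u => hgap (.inr x) (.inl u)
  set τS' := Function.update τS R.S.root (c - δ)
  set τT' : V → ℝ := fun u => Sum.elim τS' (fun _ => τT u - δ / 2) (μ u)
  have hS' : ∀ x, x ≠ R.S.root → τS' x = τS x := fun x hx => Function.update_of_ne hx _ _
  have hS'le : ∀ x, τS' x ≤ τS x := by
    intro x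
    rcases eq_or_ne x R.S.root with rfl | hx
    · simp only [τS', Function.update_self]
      linarith [hcS R.S.root]
    · exact (hS' x hx).le
  have hT'dup : ∀ u, R.IsDupHGT u → τT' u = τT u - δ / 2 := by
    intro u hu
    obtain ⟨y, -, hy⟩ := hμ.2.2.1 u hu
    simp [τT', hy]
  have hbelow : ∀ u, R.IsDupHGT u → ∀ x, τS x < τT u → τS' x < τT' u := by
    intro u hu x hx
    linarith [hS'le x, hT'dup u hu, hgapST x u hx]
  refine ⟨τT', τS', ⟨?_, hτS.update_root fun x _ => by linarith [hcS x], fun u x hx => by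
    simp [τT', hx], fun u hu => ?_, fun v x hv hx => ?_, fun u hu => ?_, fun u hu x => ?_⟩⟩
  · exact hμ.isTimeMap_sumElim hτT hD1 hS'le hS' (fun x y => hgap (.inl x) (.inl y))
      (half_pos hδ).le (half_lt_self hδ)
  · rw [hT'dup u hu, hS' _ (hμ.lca_sigmaBar_ne_root (hne u) hu)]
    linarith [hD2 u _ hu (R.S.anc_refl _)]
  · exact hbelow _ (.inr (R.trans_hgt v hv)) x (hD3 v x hv hx)
  · simp only [hT'dup u hu, τS', Function.update_self]
    linarith [hcT u]
  · rcases eq_or_ne x R.S.root with rfl | hx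
    · simp only [hT'dup u hu, τS', Function.update_self]
      linarith [hcT u]
    rcases lt_or_ge (τS x) (τT u) with hlt | hge
    · exact (hbelow u hu x hlt).ne
    · rw [hS' x hx, hT'dup u hu]
      linarith

theorem IsStrictDating.exists_isRecon_timeIn {μ : V → W ⊕ W} {τT : V → ℝ} {τS : W → ℝ}
    (hD : R.IsStrictDating μ τT τS) (hμ : R.IsRecon μ) (hne : ∀ u, (R.sigmaBar u).Nonempty) :
    ∃ μ', R.IsRecon μ' ∧ ∀ u, R.S.TimeIn τS (τT u) (μ' u) := by
  classical
  have hedge : ∀ u, ∃ y, R.IsDupHGT u →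
      R.S.anc (R.lca (R.sigmaBar u)) y ∧ R.S.TimeIn τS (τT u) (.inr y) := by
    intro u
    by_cases hu : R.IsDupHGT u
    · obtain ⟨y, hy⟩ := R.S.exists_anc_timeIn_inr τS (hD.lt_lca u hu) (hD.root_lt u hu) (hD.ne u hu)
      exact ⟨y, fun _ => hy⟩
    · exact ⟨R.S.root, fun h => absurd h hu⟩
  choose Y hY using hedge
  let μ' : V → W ⊕ W := fun u => if R.IsDupHGT u then .inr (Y u) else μ u
  have htime : ∀ u, R.S.TimeIn τS (τT u) (μ' u) := by
    intro u
    by_cases hu : R.IsDupHGT u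
    · simpa [μ', hu] using (hY u hu).2
    · obtain ⟨x, hx⟩ := hμ.exists_eq_inl hu
      simpa [μ', hu, hx, RTree.TimeIn] using hD.d1 u x hx
  exact ⟨μ', isRecon_of_timeIn hμ hne hD.isTimeMap_T hD.isTimeMap_S hD.d3 (fun u hu => if_neg hu)
    (fun u hu => ⟨Y u, if_pos hu, (hY u hu).1⟩) htime, htime⟩

end ReconSetup

theorem stmt11_general {V W : Type*} [Fintype V] [Fintype W]
    (R : ReconSetup V W) (μ : V → W ⊕ W) (hrec : R.IsRecon μ)
    (hO1 : R.O1) (hO2 : R.O2)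
    (τT : V → ℝ) (τS : W → ℝ)
    (hτT : R.T.IsTimeMap τT) (hτS : R.S.IsTimeMap τS)
    (hD1 : R.D1 μ τT τS) (hD2 : R.D2 τT τS) (hD3 : R.D3 τT τS) :
    ∃ μ', R.IsRecon μ' ∧ R.TimeConsistent μ' := by
  have hne := R.sigmaBar_nonempty hτT hO1 hO2
  obtain ⟨τT', τS', hD⟩ := hrec.exists_isStrictDating hne hτT hτS hD1 hD2 hD3
  obtain ⟨μ', hμ', htime⟩ := hD.exists_isRecon_timeIn hrec hne
  exact ⟨μ', hμ', R.timeConsistent_of_timeIn hD.isTimeMap_T hD.isTimeMap_S htime⟩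

/-- if a reconciliation map `μ` admits time maps `τ_T, τ_S`
satisfying (D1)-(D3), then there exists a time-consistent reconciliation map `μ'`
from `(T;t,σ)` to `S`. -/
theorem stmt11 {V W : Type*} [Fintype V] [Fintype W]
    (R : ReconSetup V W) (μ : V → W ⊕ W) (hrec : R.IsRecon μ)
    (hO1 : R.O1) (hO2 : R.O2) (hS1 : R.Sigma1) (hS2 : R.Sigma2)
    (τT : V → ℝ) (τS : W → ℝ)
    (hτT : R.T.IsTimeMap τT) (hτS : R.S.IsTimeMap τS)
    (hD1 : R.D1 μ τT τS) (hD2 : R.D2 τT τS) (hD3 : R.D3 τT τS) :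
    ∃ μ', R.IsRecon μ' ∧ R.TimeConsistent μ' :=
  stmt11_general R μ hrec hO1 hO2 τT τS hτT hτS hD1 hD2 hD3
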